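/- arXiv:1109.0476 — 2 statements merged into one kernel-verified Lean document; each statement's English description precedes it below -/
import Mathlib

section
/- Let k be an algebraically closed field of characteristic zero and r ≥ 3 an integer. Let S ⊂ ℙ^r(k) be a set of r+2 points in linearly general position. Then the set of rational normal curves in ℙ^r(k) containing S is infinite. -/
/-!
After a linear change of coordinates, any `r + 2` points in linearly general position become the
standard frame `e₀, …, e_r, e₀ + ⋯ + e_r`: write the last point in the basis formed by the others;
by general position its coordinates are nonzero, so rescaling the basis makes them all `1`.

For distinct nodes `v₀, …, v_r`, the linear map whose `i`-th row holds the coefficients of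
`∏_{j ≠ i} (X - v_j)` sends `(a^r, a^(r-1) b, …, b^r)` to `(∏_{j ≠ i} (b - v_j a))_i`. It maps
`(1, v_i)` to a multiple of `e_i` and `(0, 1)` to `e₀ + ⋯ + e_r`, hence it is invertible and carries
the standard rational normal curve to one through the standard frame. On that curve, a point with
nonzero coordinates satisfies `1 / y_i = α v_i + β`, so two such curves coincide only if their
nodes are affinely related. Moving a single node along `ℕ` therefore gives infinitely many curves.
-/

open Projectivization

/-- The standard rational normal curve in `ℙ^r(k)`: the set of points represented by
vectors `(a^r, a^(r-1)b, …, b^r)` for `(a,b) ∈ k² \ {0}` (equivalently, for `a, b` such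
that this vector is nonzero). -/
def stdRNC (k : Type*) [Field k] (r : ℕ) :
    Set (Projectivization k (Fin (r + 1) → k)) :=
  {P | ∃ (a b : k)
      (h : (fun j : Fin (r + 1) => a ^ (r - (j : ℕ)) * b ^ (j : ℕ)) ≠ 0),
      P = Projectivization.mk k _ h}

/-- A rational normal curve in `ℙ^r(k)` is the image of the standard rational normal
curve under the projectivization of an invertible linear map of `k^(r+1)`. -/
def IsRNC (k : Type*) [Field k] (r : ℕ)
    (D : Set (Projectivization k (Fin (r + 1) → k))) : Prop :=
  ∃ g : (Fin (r + 1) → k) ≃ₗ[k] (Fin (r + 1) → k),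
    D = Projectivization.map (g : (Fin (r + 1) → k) →ₗ[k] (Fin (r + 1) → k))
      g.injective '' stdRNC k r

/-- A set of points of `ℙ^r(k)` is in linearly general position if any at most `r+1`
of them have linearly independent representative vectors in `k^(r+1)`. -/
def InLinGenPos (k : Type*) [Field k] (r : ℕ)
    (S : Set (Projectivization k (Fin (r + 1) → k))) : Prop :=
  ∀ T : Finset (Projectivization k (Fin (r + 1) → k)), ↑T ⊆ S → T.card ≤ r + 1 →
    LinearIndependent k (fun P : T => Projectivization.rep P.1)

namespace Polynomial

lemma eval_homogenize_eq_sum {R : Type*} [CommSemiring R] (p : R[X]) (n : ℕ) (x : Fin 2 → R) :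
    MvPolynomial.eval x (p.homogenize n) =
      ∑ m ∈ Finset.range (n + 1), p.coeff m * (x 1 ^ (n - m) * x 0 ^ m) := by
  simp only [homogenize, Finset.Nat.sum_antidiagonal_eq_sum_range_succ_mk, MvPolynomial.eval_sum]
  refine Finset.sum_congr rfl fun m _ ↦ ?_
  rw [MvPolynomial.eval_monomial, Finsupp.update_eq_add_single, Finsupp.prod_add_index',
    Finsupp.prod_single_index, Finsupp.prod_single_index]
  all_goals simp [pow_add, mul_comm]

lemma homogenize_nodal {R ι : Type*} [CommRing R] [Nontrivial R] (s : Finset ι) (v : ι → R) :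
    (Lagrange.nodal s v).homogenize s.card =
      ∏ i ∈ s, (MvPolynomial.X 0 - MvPolynomial.C (v i) * MvPolynomial.X 1) := by
  rw [Lagrange.nodal, Finset.card_eq_sum_ones, homogenize_finsetProd fun i _ ↦ by simp]
  simp [homogenize_sub]

end Polynomial

lemma Module.Basis.repr_ne_zero_of_linearIndependent_update {ι K V : Type*} [DecidableEq ι]
    [DivisionRing K] [AddCommGroup V] [Module K V] (b : Module.Basis ι K V) {w : V} {i : ι}
    (h : LinearIndependent K (Function.update b i w)) : b.repr w i ≠ 0 := by
  intro hwi
  refine linearIndependent_iff_notMem_span.mp h i ?_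
  have himage : Function.update b i w '' (Set.univ \ {i}) = b '' (Set.univ \ {i}) :=
    Set.image_congr fun j hj ↦ Function.update_of_ne (by simpa using hj) _ _
  rw [Function.update_self, himage, b.mem_span_image]
  intro j hj
  simp only [Finset.mem_coe, Finsupp.mem_support_iff] at hj
  simpa using fun hji : j = i ↦ hj (hji ▸ hwi)

lemma Module.Basis.exists_linearEquiv_pi_single_one {ι K V : Type*} [Fintype ι] [DecidableEq ι]
    [DivisionRing K] [AddCommGroup V] [Module K V] (b : Module.Basis ι K V) (w : V)
    (hw : ∀ i, b.repr w i ≠ 0) :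
    ∃ g : (ι → K) ≃ₗ[K] V, (∀ i, g (Pi.single i 1) = b.repr w i • b i) ∧ g 1 = w := by
  let b' := b.unitsSMul fun i ↦ Units.mk0 _ (hw i)
  refine ⟨b'.equivFun.symm, fun i ↦ ?_, ?_⟩
  · simp [b', Module.Basis.unitsSMul_apply]
  · simp [b', Module.Basis.equivFun_symm_apply, Module.Basis.unitsSMul_apply, b.sum_repr]

open Finset Function
open scoped LinearAlgebra.Projectivization

lemma Fin.update_castSucc_last_injective {n : ℕ} (i : Fin (n + 1)) :
    Injective (update Fin.castSucc i (Fin.last (n + 1))) := by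
  intro a b hab
  by_cases ha : a = i <;> by_cases hb : b = i <;>
    simp_all [update_of_ne, Fin.castSucc_ne_last, (Fin.castSucc_ne_last _).symm]

section

variable {k : Type*} [Field k] {r : ℕ}

def veronese (r : ℕ) (a b : k) : Fin (r + 1) → k := fun j ↦ a ^ (r - (j : ℕ)) * b ^ (j : ℕ)

lemma veronese_ne_zero {a b : k} (h : a ≠ 0 ∨ b ≠ 0) : veronese r a b ≠ 0 := by
  rcases h with ha | hb
  · exact fun h0 ↦ pow_ne_zero r ha (by simpa [veronese] using congrFun h0 0)
  · exact fun h0 ↦ pow_ne_zero r hb (by simpa [veronese] using congrFun h0 (Fin.last r))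

noncomputable def nodalMap (v : Fin (r + 1) → k) : (Fin (r + 1) → k) →ₗ[k] (Fin (r + 1) → k) :=
  Matrix.mulVecLin (Matrix.of fun i m ↦ (Lagrange.nodal (univ.erase i) v).coeff m)

lemma nodalMap_veronese (v : Fin (r + 1) → k) (a b : k) (i : Fin (r + 1)) :
    nodalMap v (veronese r a b) i = ∏ j ∈ univ.erase i, (b - v j * a) := by
  have hcard : (univ.erase i).card = r := by simp
  have h := congrArg (MvPolynomial.eval ![b, a]) (Polynomial.homogenize_nodal (univ.erase i) v)
  rw [hcard, Polynomial.eval_homogenize_eq_sum] at h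
  simpa [nodalMap, Matrix.mulVec, dotProduct, veronese, Fin.sum_univ_eq_sum_range
    (fun m ↦ (Lagrange.nodal (univ.erase i) v).coeff m * (a ^ (r - m) * b ^ m))] using h

lemma nodalMap_veronese_one_node (v : Fin (r + 1) → k) (i : Fin (r + 1)) :
    nodalMap v (veronese r 1 (v i)) = Pi.single i (∏ j ∈ univ.erase i, (v i - v j)) := by
  ext l
  rw [nodalMap_veronese]
  rcases eq_or_ne l i with rfl | hl
  · simp
  · rw [Pi.single_eq_of_ne hl]
    exact prod_eq_zero (mem_erase.mpr ⟨hl.symm, mem_univ i⟩) (by ring)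

lemma nodalMap_veronese_zero_one (v : Fin (r + 1) → k) : nodalMap v (veronese r 0 1) = 1 := by
  ext l
  simp [nodalMap_veronese]

lemma nodalMap_bijective {v : Fin (r + 1) → k} (hv : Injective v) : Bijective (nodalMap v) := by
  have hsurj : Surjective (nodalMap v) := by
    rw [← LinearMap.range_eq_top, eq_top_iff, ← (Pi.basisFun k _).span_eq, Submodule.span_le]
    rintro _ ⟨i, rfl⟩
    have hw : ∏ j ∈ univ.erase i, (v i - v j) ≠ 0 :=
      prod_ne_zero_iff.mpr fun j hj ↦ sub_ne_zero.mpr (hv.ne (ne_of_mem_erase hj).symm)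
    refine ⟨(∏ j ∈ univ.erase i, (v i - v j))⁻¹ • veronese r 1 (v i), ?_⟩
    rw [map_smul, nodalMap_veronese_one_node, Pi.basisFun_apply, ← Pi.single_smul,
      smul_eq_mul, inv_mul_cancel₀ hw]
  exact ⟨LinearMap.injective_iff_surjective.mpr hsurj, hsurj⟩

noncomputable def nodalEquiv {v : Fin (r + 1) → k} (hv : Injective v) :
    (Fin (r + 1) → k) ≃ₗ[k] (Fin (r + 1) → k) :=
  LinearEquiv.ofBijective _ (nodalMap_bijective hv)

def nodalRNC {v : Fin (r + 1) → k} (hv : Injective v) : Set (ℙ k (Fin (r + 1) → k)) :=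
  Projectivization.map (nodalEquiv hv : (Fin (r + 1) → k) →ₗ[k] (Fin (r + 1) → k))
    (nodalEquiv hv).injective '' stdRNC k r

lemma isRNC_nodalRNC {v : Fin (r + 1) → k} (hv : Injective v) : IsRNC k r (nodalRNC hv) :=
  ⟨nodalEquiv hv, rfl⟩

lemma IsRNC.image_map {D : Set (ℙ k (Fin (r + 1) → k))} (hD : IsRNC k r D)
    (g : (Fin (r + 1) → k) ≃ₗ[k] (Fin (r + 1) → k)) :
    IsRNC k r (Projectivization.map (g : (Fin (r + 1) → k) →ₗ[k] (Fin (r + 1) → k))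
      g.injective '' D) := by
  obtain ⟨h, rfl⟩ := hD
  refine ⟨h.trans g, ?_⟩
  rw [Set.image_image]
  refine Set.image_congr fun P _ ↦ ?_
  induction P using Projectivization.ind with | h x hx => rfl

def standardFrame (k : Type*) [Field k] (r : ℕ) : Set (ℙ k (Fin (r + 1) → k)) :=
  insert (mk k 1 one_ne_zero) (Set.range fun i ↦ mk k (Pi.single i 1) (by simp))

lemma standardFrame_subset_nodalRNC {v : Fin (r + 1) → k} (hv : Injective v) :
    standardFrame k r ⊆ nodalRNC hv := by
  rintro _ (rfl | ⟨i, rfl⟩)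
  · have h01 := veronese_ne_zero (r := r) (a := (0 : k)) (.inr one_ne_zero)
    refine ⟨mk k _ h01, ⟨0, 1, h01, rfl⟩, ?_⟩
    rw [map_mk, mk_eq_mk_iff']
    exact ⟨1, by simp [nodalEquiv, nodalMap_veronese_zero_one]⟩
  · have h1 := veronese_ne_zero (r := r) (b := v i) (.inl one_ne_zero)
    refine ⟨mk k _ h1, ⟨1, v i, h1, rfl⟩, ?_⟩
    rw [map_mk, mk_eq_mk_iff']
    exact ⟨∏ j ∈ univ.erase i, (v i - v j),
      by simp [nodalEquiv, nodalMap_veronese_one_node, ← Pi.single_smul]⟩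

lemma InLinGenPos.linearIndependent_rep {S : Set (ℙ k (Fin (r + 1) → k))}
    (hS : InLinGenPos k r S)
    {ι : Type*} [Fintype ι] (hι : Fintype.card ι ≤ r + 1) {f : ι → ℙ k (Fin (r + 1) → k)}
    (hf : Injective f) (hfS : ∀ i, f i ∈ S) : LinearIndependent k fun i ↦ (f i).rep := by
  classical
  have hT := hS (univ.image f) (by simpa [Set.range_subset_iff] using hfS)
    (by rwa [card_image_of_injective _ hf, card_univ])
  exact hT.comp (fun i ↦ ⟨f i, mem_image_of_mem f (mem_univ i)⟩)
    fun i j hij ↦ hf (congrArg Subtype.val hij)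

lemma exists_linearEquiv_subset_image_standardFrame {S : Finset (ℙ k (Fin (r + 1) → k))}
    (hcard : S.card = r + 2) (hS : InLinGenPos k r S) :
    ∃ g : (Fin (r + 1) → k) ≃ₗ[k] (Fin (r + 1) → k),
      ↑S ⊆ Projectivization.map (g : (Fin (r + 1) → k) →ₗ[k] (Fin (r + 1) → k)) g.injective ''
        standardFrame k r := by
  classical
  let e := S.equivFinOfCardEq hcard
  let p : Fin (r + 2) → ℙ k (Fin (r + 1) → k) := fun i ↦ e.symm i
  have hli {f : Fin (r + 1) → Fin (r + 2)} (hf : Injective f) :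
      LinearIndependent k fun j ↦ (p (f j)).rep :=
    hS.linearIndependent_rep (by simp) ((Subtype.val_injective.comp e.symm.injective).comp hf)
      fun j ↦ (e.symm (f j)).2
  let b := basisOfLinearIndependentOfCardEqFinrank (hli (Fin.castSucc_injective _)) (by simp)
  have hb : ⇑b = fun j ↦ (p j.castSucc).rep := coe_basisOfLinearIndependentOfCardEqFinrank _ _
  have hw (i : Fin (r + 1)) : b.repr (p (Fin.last _)).rep i ≠ 0 := by
    have hupdate : update (⇑b) i (p (Fin.last _)).rep =
        fun j ↦ (p (update Fin.castSucc i (Fin.last _) j)).rep := by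
      ext1 j
      rcases eq_or_ne j i with rfl | hj
      · simp
      · simp [update_of_ne hj, hb]
    refine b.repr_ne_zero_of_linearIndependent_update ?_
    rw [hupdate]
    exact hli (Fin.update_castSucc_last_injective i)
  obtain ⟨g, hg_single, hg_one⟩ := b.exists_linearEquiv_pi_single_one _ hw
  refine ⟨g, fun x hx ↦ ?_⟩
  obtain ⟨j, rfl⟩ : ∃ j, p j = x := ⟨e ⟨x, hx⟩, by simp [p]⟩
  induction j using Fin.lastCases with
  | last =>
    refine ⟨_, Set.mem_insert _ _, ?_⟩
    rw [map_mk, ← mk_rep (p _), mk_eq_mk_iff']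
    exact ⟨1, by simp [hg_one]⟩
  | cast i =>
    refine ⟨_, Set.mem_insert_of_mem _ ⟨i, rfl⟩, ?_⟩
    rw [map_mk, ← mk_rep (p _), mk_eq_mk_iff']
    exact ⟨b.repr (p (Fin.last _)).rep i, by simp [hg_single, hb]⟩

lemma exists_inv_eq_affine_of_mk_mem_nodalRNC (hr : r ≠ 0) {v : Fin (r + 1) → k}
    (hv : Injective v) {y : Fin (r + 1) → k} (hy : y ≠ 0) (hmem : mk k y hy ∈ nodalRNC hv)
    (hcoord : ∀ i, y i ≠ 0) : ∃ α β : k, ∀ i, (y i)⁻¹ = α * v i + β := by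
  have : Nontrivial (Fin (r + 1)) := Fin.nontrivial_iff_two_le.mpr (by omega)
  obtain ⟨_, ⟨a, b, hab, rfl⟩, hP⟩ := hmem
  rw [map_mk, mk_eq_mk_iff'] at hP
  obtain ⟨s, hs⟩ := hP
  have hcoord' (i : Fin (r + 1)) : s * y i = ∏ j ∈ univ.erase i, (b - v j * a) := by
    rw [← smul_eq_mul, ← Pi.smul_apply, hs]
    exact nodalMap_veronese v a b i
  have hs0 : s ≠ 0 := by
    rintro rfl
    exact hab ((nodalEquiv hv).map_eq_zero_iff.mp (hs.symm.trans (zero_smul k y)))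
  have hfactor (j : Fin (r + 1)) : b - v j * a ≠ 0 := by
    obtain ⟨i, hij⟩ := exists_ne j
    have h := hcoord' i ▸ mul_ne_zero hs0 (hcoord i)
    exact (prod_ne_zero_iff.mp h) j (mem_erase.mpr ⟨hij.symm, mem_univ j⟩)
  set Y := ∏ j, (b - v j * a)
  have hY : Y ≠ 0 := prod_ne_zero_iff.mpr fun j _ ↦ hfactor j
  refine ⟨-(s * a / Y), s * b / Y, fun i ↦ ?_⟩
  have hYi : s * y i * (b - v i * a) = Y := by
    rw [hcoord', mul_comm]
    exact mul_prod_erase univ (fun j ↦ b - v j * a) (mem_univ i)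
  have hinv : (y i)⁻¹ = s * (b - v i * a) / Y := by
    rw [eq_div_iff hY, ← hYi]
    field_simp [hcoord i]
  rw [hinv]
  ring

lemma exists_affine_of_nodalRNC_subset [Infinite k] (hr : r ≠ 0) {v w : Fin (r + 1) → k}
    (hv : Injective v) (hw : Injective w) (h : nodalRNC hv ⊆ nodalRNC hw) :
    ∃ α β : k, ∀ i, v i = α * w i + β := by
  classical
  obtain ⟨t, ht⟩ := Infinite.exists_notMem_finset (univ.image v)
  have htv (j : Fin (r + 1)) : t - v j ≠ 0 :=
    sub_ne_zero.mpr fun h ↦ ht (h ▸ mem_image_of_mem v (mem_univ j))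
  have h1t := veronese_ne_zero (r := r) (b := t) (.inl one_ne_zero)
  set y := nodalMap v (veronese r 1 t)
  have hy (i : Fin (r + 1)) : y i = ∏ j ∈ univ.erase i, (t - v j) := by
    simp [y, nodalMap_veronese]
  have hcoord (i : Fin (r + 1)) : y i ≠ 0 := hy i ▸ prod_ne_zero_iff.mpr fun j _ ↦ htv j
  have hmem : mk k y ((nodalEquiv hv).map_ne_zero_iff.mpr h1t) ∈ nodalRNC hv :=
    ⟨mk k _ h1t, ⟨1, t, h1t, rfl⟩, rfl⟩
  obtain ⟨α, β, hαβ⟩ := exists_inv_eq_affine_of_mk_mem_nodalRNC hr hw _ (h hmem) hcoord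
  set W := ∏ j, (t - v j)
  refine ⟨-(W * α), t - W * β, fun i ↦ ?_⟩
  have hWi : y i * (t - v i) = W := by
    rw [hy, mul_comm]
    exact mul_prod_erase univ (fun j ↦ t - v j) (mem_univ i)
  calc v i = t - W * (y i)⁻¹ := by rw [← hWi]; field_simp [hcoord i]; ring
    _ = -(W * α) * w i + (t - W * β) := by rw [hαβ i]; ring

/-- The nodes `0, 1, …, r` with the one of index `2` moved to `r + 1 + n`. The only affine map fixing `0`
and `1` is the identity, so different `n` give different curves. -/
def movingNodes (k : Type*) [Field k] (r n : ℕ) : Fin (r + 1) → k :=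
  fun j ↦ ((if (j : ℕ) = 2 then r + 1 + n else j : ℕ) : k)

lemma movingNodes_injective [CharZero k] (n : ℕ) : Injective (movingNodes k r n) := by
  refine (Nat.cast_injective (R := k)).comp fun i j hij ↦ Fin.ext ?_
  have := i.isLt
  have := j.isLt
  split_ifs at hij <;> omega

lemma eq_of_movingNodes_eq_affine [CharZero k] (hr : 2 ≤ r) {n m : ℕ} {α β : k}
    (h : ∀ i, movingNodes k r n i = α * movingNodes k r m i + β) : n = m := by
  have h0 := h ⟨0, by omega⟩
  have h1 := h ⟨1, by omega⟩
  have h2 := h ⟨2, by omega⟩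
  simp only [movingNodes] at h0 h1 h2
  norm_num at h0 h1 h2
  have hβ : β = 0 := by linear_combination -h0
  have hα : α = 1 := by linear_combination -h1 + h0
  subst hα hβ
  exact_mod_cast (by linear_combination h2 : (n : k) = m)

end

theorem statement_15_general (k : Type*) [Field k] [CharZero k]
    (r : ℕ) (hr : 3 ≤ r)
    (S : Finset (Projectivization k (Fin (r + 1) → k))) (hcard : S.card = r + 2)
    (hS : InLinGenPos k r ↑S) :
    {D : Set (Projectivization k (Fin (r + 1) → k)) | IsRNC k r D ∧ ↑S ⊆ D}.Infinite := by
  obtain ⟨g, hSg⟩ := exists_linearEquiv_subset_image_standardFrame hcard hS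
  let D : ℕ → Set (Projectivization k (Fin (r + 1) → k)) := fun n ↦
    Projectivization.map (g : (Fin (r + 1) → k) →ₗ[k] (Fin (r + 1) → k)) g.injective ''
      nodalRNC (movingNodes_injective (k := k) (r := r) n)
  refine Set.infinite_of_injective_forall_mem (f := D) (fun n m hnm ↦ ?_) fun n ↦
    ⟨(isRNC_nodalRNC _).image_map g, hSg.trans (Set.image_mono (standardFrame_subset_nodalRNC _))⟩
  have hcurve := (Set.image_injective.mpr (Projectivization.map_injective _ g.injective)) hnm
  obtain ⟨α, β, h⟩ := exists_affine_of_nodalRNC_subset (by omega) _ _ hcurve.le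
  exact eq_of_movingNodes_eq_affine (by omega) h

/-- For a set `S` of `r+2` points of `ℙ^r(k)` in linearly general position (over an
algebraically closed field of characteristic zero, `r ≥ 3`), the set of rational normal
curves containing `S` is infinite. -/
theorem statement_15 (k : Type*) [Field k] [IsAlgClosed k] [CharZero k]
    (r : ℕ) (hr : 3 ≤ r)
    (S : Finset (Projectivization k (Fin (r + 1) → k))) (hcard : S.card = r + 2)
    (hS : InLinGenPos k r ↑S) :
    {D : Set (Projectivization k (Fin (r + 1) → k)) | IsRNC k r D ∧ ↑S ⊆ D}.Infinite :=
  statement_15_general k r hr S hcard hS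
end

section
/- Let k be an algebraically closed field of characteristic zero and r ≥ 3 an integer. Let S ⊂ ℙ^r(k) be a set of r+2 points in linearly general position. Then a point Q ∈ ℙ^r(k) \ S lies on some rational normal curve containing S if and only if S ∪ {Q} is in linearly general position; i.e., the union of all rational normal curves containing S equals S ∪ {Q ∈ ℙ^r(k) : S ∪ {Q} is in linearly general position}. -/
/-!
Any `r + 1` points `[a^r : a^(r-1) b : … : b^r]` with pairwise non-proportional parameters
are linearly independent: the divided difference `v ↦ (b₀ vⱼ - a₀ vⱼ₊₁)ⱼ` kills the point
with parameter `(a₀, b₀)` and sends the others to nonzero multiples of points of the curve of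
degree `r - 1`. Hence points on a rational normal curve are in linearly general position.

Conversely, scale a basis `B` so that `S = {[B₀], …, [Bᵣ], [∑ Bᵢ]}`. If `Q = [∑ qᵢ Bᵢ]` and
`S ∪ {Q}` is in linearly general position, the `qᵢ` are nonzero and pairwise distinct. Put
`tᵢ = -1/qᵢ` and `pᵢ = ∏_{l ≠ i} (X - t_l)`. The linear map sending `(a^r, …, b^r)` to
`∑ᵢ pᵢ^hom(a, b) Bᵢ` is invertible and maps the standard curve onto one through `[Bᵢ]`
(parameter `tᵢ`), through `[∑ Bᵢ]` (parameter `∞`, the `pᵢ` being monic) and through `Q`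
(parameter `0`, as `pᵢ(0) = qᵢ ∏ₗ q_l⁻¹`).
-/

open Projectivization

open scoped LinearAlgebra.Projectivization
open Polynomial Lagrange Finset

theorem Finset.exists_eq_insert_range_of_card_eq_succ {α : Type*} {S : Finset α} {n : ℕ}
    (h : S.card = n + 1) :
    ∃ (u : α) (p : Fin n → α), Function.Injective p ∧ u ∉ Set.range p ∧
      (S : Set α) = insert u (Set.range p) := by
  let e := (S.equivFinOfCardEq h).symm
  obtain ⟨u, p, hup⟩ := Fin.exists_cons fun i => (e i : α)
  have hinj : Function.Injective (Fin.cons u p : Fin (n + 1) → α) :=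
    hup ▸ Subtype.val_injective.comp e.injective
  have hrange : Set.range (Fin.cons u p : Fin (n + 1) → α) = S := by
    rw [← hup, ← Function.comp_def, Set.range_comp, e.range_eq_univ, Set.image_univ,
      Subtype.range_coe]
  rw [Fin.cons_injective_iff] at hinj
  rw [Fin.range_cons] at hrange
  exact ⟨u, p, hinj.2, hinj.1, hrange.symm⟩

section RationalNormalCurve

variable {k : Type*} [Field k]

def rncVec (r : ℕ) (a b : k) : Fin (r + 1) → k := fun j => a ^ (r - (j : ℕ)) * b ^ (j : ℕ)

theorem rncVec_ne_zero {r : ℕ} {a b : k} (hab : a ≠ 0 ∨ b ≠ 0) : rncVec r a b ≠ 0 := by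
  intro h
  rcases hab with ha | hb
  · simpa [rncVec, ha] using congrFun h 0
  · simpa [rncVec, hb] using congrFun h (Fin.last r)

theorem rncVec_ne_zero_iff {r : ℕ} (hr : r ≠ 0) {a b : k} :
    rncVec r a b ≠ 0 ↔ a ≠ 0 ∨ b ≠ 0 := by
  refine ⟨fun h => ?_, rncVec_ne_zero⟩
  contrapose! h
  obtain ⟨rfl, rfl⟩ := h
  funext j
  by_cases hj : (j : ℕ) = 0 <;> simp [rncVec, hj, hr]

theorem rncVec_smul (r : ℕ) (s a b : k) : rncVec r (s * a) (s * b) = s ^ r • rncVec r a b := by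
  funext j
  simp only [rncVec, Pi.smul_apply, smul_eq_mul, mul_pow]
  rw [← pow_sub_mul_pow s (Nat.lt_succ_iff.mp j.isLt)]
  ring

theorem rncVec_one_left (r : ℕ) (t : k) :
    rncVec r 1 t = fun j : Fin (r + 1) => t ^ (j : ℕ) := by
  funext j
  simp [rncVec]

theorem rncVec_zero_one (r : ℕ) : rncVec r (0 : k) 1 = Pi.single (Fin.last r) 1 := by
  funext j
  rcases eq_or_ne j (Fin.last r) with rfl | hj
  · simp [rncVec]
  · have : r - (j : ℕ) ≠ 0 := by have := Fin.val_lt_last hj; omega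
    simp [rncVec, hj, this]

theorem rncVec_one_zero (r : ℕ) : rncVec r (1 : k) 0 = Pi.single 0 1 := by
  funext j
  rcases eq_or_ne j 0 with rfl | hj
  · simp [rncVec]
  · simp [rncVec, hj, Fin.val_ne_zero_iff.mpr hj]

theorem mk_rncVec_eq_mk_rncVec {r : ℕ} {a b a' b' : k} (hab : a ≠ 0 ∨ b ≠ 0)
    (hab' : a' ≠ 0 ∨ b' ≠ 0) (h : a * b' = a' * b) :
    Projectivization.mk k (rncVec r a b) (rncVec_ne_zero hab) =
      Projectivization.mk k (rncVec r a' b') (rncVec_ne_zero hab') := by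
  obtain ⟨s, rfl, rfl⟩ : ∃ s, a' = s * a ∧ b' = s * b := by
    rcases hab with ha | hb
    · exact ⟨a' / a, by field_simp, by field_simp; linear_combination h⟩
    · exact ⟨b' / b, by field_simp; linear_combination -h, by field_simp⟩
  exact ((Projectivization.mk_eq_mk_iff' k _ _ _ _).mpr
    ⟨s ^ r, (rncVec_smul r s a b).symm⟩).symm

def divDiff (r : ℕ) (a₀ b₀ : k) : (Fin (r + 2) → k) →ₗ[k] (Fin (r + 1) → k) :=
  b₀ • LinearMap.funLeft k k Fin.castSucc - a₀ • LinearMap.funLeft k k Fin.succ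

theorem divDiff_rncVec (r : ℕ) (a₀ b₀ a b : k) :
    divDiff r a₀ b₀ (rncVec (r + 1) a b) = (b₀ * a - a₀ * b) • rncVec r a b := by
  funext j
  have hj : r + 1 - (j : ℕ) = r - j + 1 := by have := j.isLt; omega
  simp only [divDiff, LinearMap.sub_apply, LinearMap.smul_apply, LinearMap.funLeft_apply,
    Pi.sub_apply, Pi.smul_apply, smul_eq_mul, rncVec, Fin.val_castSucc, Fin.val_succ, hj,
    Nat.add_sub_add_right]
  ring

theorem linearIndependent_rncVec {ι : Type*} [Fintype ι] {r : ℕ}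
    (hcard : Fintype.card ι ≤ r + 1) {a b : ι → k} (hab : ∀ i, a i ≠ 0 ∨ b i ≠ 0)
    (hpair : Pairwise fun i j => a i * b j ≠ a j * b i) :
    LinearIndependent k fun i => rncVec r (a i) (b i) := by
  induction r generalizing ι with
  | zero =>
    have : Subsingleton ι := Fintype.card_le_one_iff_subsingleton.mp hcard
    exact (linearIndependent_subsingleton_index_iff _).mpr fun i => rncVec_ne_zero (hab i)
  | succ r ih =>
    rcases subsingleton_or_nontrivial ι with _ | _
    · exact (linearIndependent_subsingleton_index_iff _).mpr fun i => rncVec_ne_zero (hab i)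
    classical
    rw [Fintype.linearIndependent_iff]
    intro c hc m
    obtain ⟨i₀, hi₀⟩ := exists_ne m
    have hsum : ∑ i : {i // i ≠ i₀},
        (c i * (b i₀ * a i - a i₀ * b i)) • rncVec r (a i) (b i) = 0 := by
      have := congrArg (divDiff r (a i₀) (b i₀)) hc
      simp only [map_sum, map_smul, divDiff_rncVec, smul_smul, map_zero] at this
      rwa [Fintype.sum_eq_add_sum_subtype_ne _ i₀, mul_comm (b i₀), sub_self, mul_zero,
        zero_smul, zero_add] at this
    have hcard' : Fintype.card {i // i ≠ i₀} ≤ r + 1 := by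
      have := Fintype.card_subtype_lt (p := fun i => i ≠ i₀) (x := i₀) (by simp)
      omega
    have hli := ih hcard' (fun i => hab i) fun i j hij => hpair (Subtype.coe_ne_coe.mpr hij)
    have hm := Fintype.linearIndependent_iff.mp hli _ hsum ⟨m, hi₀.symm⟩
    refine (mul_eq_zero.mp hm).resolve_right fun h => hpair hi₀.symm ?_
    linear_combination h

theorem exists_mk_rncVec_eq_of_mem_map_stdRNC {r : ℕ} (hr : r ≠ 0)
    {g : (Fin (r + 1) → k) ≃ₗ[k] (Fin (r + 1) → k)} {P : ℙ k (Fin (r + 1) → k)}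
    (hP : P ∈ Projectivization.map (g : (Fin (r + 1) → k) →ₗ[k] (Fin (r + 1) → k))
      g.injective '' stdRNC k r) :
    ∃ (a b : k) (hab : a ≠ 0 ∨ b ≠ 0),
      Projectivization.map (g : (Fin (r + 1) → k) →ₗ[k] (Fin (r + 1) → k)) g.injective
        (Projectivization.mk k (rncVec r a b) (rncVec_ne_zero hab)) = P := by
  obtain ⟨_, ⟨a, b, hv, rfl⟩, rfl⟩ := hP
  exact ⟨a, b, (rncVec_ne_zero_iff hr).mp hv, rfl⟩

theorem IsRNC.inLinGenPos {r : ℕ} (hr : r ≠ 0) {D : Set (ℙ k (Fin (r + 1) → k))}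
    (hD : IsRNC k r D) : InLinGenPos k r D := by
  obtain ⟨g, rfl⟩ := hD
  intro T hT hTcard
  choose a b hab hP using fun P : T => exists_mk_rncVec_eq_of_mem_map_stdRNC hr (hT P.2)
  have hpair : Pairwise fun P Q : T => a P * b Q ≠ a Q * b P := fun P Q hPQ h =>
    hPQ <| Subtype.ext <| by rw [← hP P, ← hP Q, mk_rncVec_eq_mk_rncVec (hab P) (hab Q) h]
  have hli := ((linearIndependent_rncVec (by simpa using hTcard) hab hpair).map' _ g.ker)
  choose c hc using fun P : T => Projectivization.exists_smul_eq_mk_rep k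
    (g (rncVec r (a P) (b P))) (g.map_ne_zero_iff.mpr (rncVec_ne_zero (hab P)))
  have hrep : (fun P : T => P.1.rep) = c • fun P => g (rncVec r (a P) (b P)) := by
    funext P
    rw [← hP P, Projectivization.map_mk]
    exact (hc P).symm
  rw [hrep]
  exact hli.units_smul c

theorem InLinGenPos.mono {r : ℕ} {S T : Set (ℙ k (Fin (r + 1) → k))} (hT : InLinGenPos k r T)
    (hST : S ⊆ T) : InLinGenPos k r S :=
  fun U hU hUcard => hT U (hU.trans hST) hUcard

theorem InLinGenPos.rep_notMem_span {r : ℕ} {S : Set (ℙ k (Fin (r + 1) → k))}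
    (hS : InLinGenPos k r S) {T : Finset (ℙ k (Fin (r + 1) → k))} (hTS : ↑T ⊆ S)
    (hTcard : T.card ≤ r) {x : ℙ k (Fin (r + 1) → k)} (hx : x ∈ S) (hxT : x ∉ T) :
    x.rep ∉ Submodule.span k (Projectivization.rep '' (T : Set (ℙ k (Fin (r + 1) → k)))) := by
  classical
  have hli :
      LinearIndepOn k Projectivization.rep (↑(insert x T) : Set (ℙ k (Fin (r + 1) → k))) :=
    hS (insert x T) (by simpa [Set.insert_subset_iff] using ⟨hx, hTS⟩)
      ((card_insert_le x T).trans (by omega))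
  rw [coe_insert, linearIndepOn_insert (by simpa using hxT)] at hli
  exact hli.2

end RationalNormalCurve

section Frame

variable {k : Type*} [Field k] {r : ℕ} {B : Module.Basis (Fin (r + 1)) k (Fin (r + 1) → k)}
  {p : Fin (r + 1) → ℙ k (Fin (r + 1) → k)} {u x : ℙ k (Fin (r + 1) → k)}

theorem sum_smul_mem_span_rep (hB : ∀ i, Projectivization.mk k (B i) (B.ne_zero i) = p i)
    {s : Finset (Fin (r + 1))} {c : Fin (r + 1) → k} (hc : ∀ l ∉ s, c l = 0) :
    ∑ l, c l • B l ∈ Submodule.span k (Projectivization.rep '' (p '' s)) := by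
  rw [← Finset.sum_subset (subset_univ s) fun l _ hl => by rw [hc l hl, zero_smul]]
  refine Submodule.sum_mem _ fun l hl => Submodule.smul_mem _ _ ?_
  have hBl : B l ∈ k ∙ (p l).rep := by
    rw [← Projectivization.submodule_eq, ← hB l, Projectivization.submodule_mk]
    exact Submodule.mem_span_singleton_self _
  refine Submodule.span_mono ?_ hBl
  simp only [Set.singleton_subset_iff]
  exact Set.mem_image_of_mem _ (Set.mem_image_of_mem _ hl)

theorem repr_rep_ne_zero (hB : ∀ i, Projectivization.mk k (B i) (B.ne_zero i) = p i)
    (hS : InLinGenPos k r (insert x (Set.range p))) (hx : x ∉ Set.range p) (i : Fin (r + 1)) :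
    B.repr x.rep i ≠ 0 := by
  classical
  intro hi
  refine hS.rep_notMem_span (T := (univ.erase i).image p) ?_ ?_ (Set.mem_insert x _) ?_ ?_
  · simp [Set.subset_def]
  · exact card_image_le.trans (by simp)
  · simpa using fun l _ h => hx ⟨l, h⟩
  · rw [← B.sum_repr x.rep, coe_image]
    exact sum_smul_mem_span_rep hB fun l hl => by rwa [show l = i by simpa using hl]

theorem repr_rep_injective (hB : ∀ i, Projectivization.mk k (B i) (B.ne_zero i) = p i)
    (hBu : ∑ i, B i = u.rep) (hS : InLinGenPos k r (insert x (insert u (Set.range p))))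
    (hx : x ∉ insert u (Set.range p)) : Function.Injective (B.repr x.rep) := by
  classical
  intro i j hij
  by_contra hne
  set q := B.repr x.rep
  have hxu : x.rep = q i • u.rep + ∑ l, (q l - q i) • B l := by
    rw [← hBu, Finset.smul_sum, ← Finset.sum_add_distrib]
    conv_lhs => rw [← B.sum_repr x.rep]
    simp_rw [← add_smul, add_sub_cancel]
    rfl
  have hs : #(univ \ {i, j}) + 2 = r + 1 := by
    rw [card_univ_sdiff, card_pair hne, Fintype.card_fin]
    have := j.isLt
    have := Fin.val_ne_iff.mpr hne
    omega
  refine hS.rep_notMem_span (T := insert u ((univ \ {i, j}).image p)) ?_ ?_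
    (Set.mem_insert x _) ?_ ?_
  · intro y hy
    rw [coe_insert, coe_image] at hy
    rcases hy with rfl | ⟨l, -, rfl⟩
    · exact Set.mem_insert_of_mem _ (Set.mem_insert _ _)
    · exact Set.mem_insert_of_mem _ (Set.mem_insert_of_mem _ (Set.mem_range_self l))
  · have := card_image_le (s := univ \ {i, j}) (f := p)
    exact (card_insert_le _ _).trans (by omega)
  · simpa [not_or] using ⟨fun h => hx (Set.mem_insert_iff.mpr (Or.inl h)),
      fun l _ _ h => hx (Set.mem_insert_of_mem u ⟨l, h⟩)⟩
  · rw [hxu, coe_insert, coe_image, Set.image_insert_eq]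
    refine Submodule.add_mem _ (Submodule.smul_mem _ _ (Submodule.subset_span (Set.mem_insert _ _)))
      (Submodule.span_mono (Set.subset_insert _ _) (sum_smul_mem_span_rep hB fun l hl => ?_))
    obtain rfl | rfl : l = i ∨ l = j := by simpa [or_iff_not_imp_left] using hl
    · exact sub_self _
    · simp [hij]

theorem exists_basis_frame (hS : InLinGenPos k r (insert u (Set.range p)))
    (hp : Function.Injective p) (hu : u ∉ Set.range p) :
    ∃ B : Module.Basis (Fin (r + 1)) k (Fin (r + 1) → k),
      (∀ i, Projectivization.mk k (B i) (B.ne_zero i) = p i) ∧ ∑ i, B i = u.rep := by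
  classical
  have hli : LinearIndependent k fun i => (p i).rep := by
    refine (linearIndepOn_range_iff hp Projectivization.rep).mp ?_
    have h :
        LinearIndepOn k Projectivization.rep (↑(univ.image p) : Set (ℙ k (Fin (r + 1) → k))) :=
      hS (univ.image p) (by simp) (card_image_le.trans (by simp))
    simpa using h
  let B₀ := basisOfLinearIndependentOfCardEqFinrank hli (by simp)
  have hB₀ : ∀ i, Projectivization.mk k (B₀ i) (B₀.ne_zero i) = p i := fun i => by
    simp only [B₀, coe_basisOfLinearIndependentOfCardEqFinrank, Projectivization.mk_rep]
  have hc := repr_rep_ne_zero hB₀ hS hu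
  refine ⟨B₀.unitsSMul fun i => Units.mk0 _ (hc i), fun i => ?_, ?_⟩
  · rw [← hB₀ i, Projectivization.mk_eq_mk_iff']
    exact ⟨B₀.repr u.rep i, by simp [Module.Basis.unitsSMul_apply]⟩
  · simp only [Module.Basis.unitsSMul_apply, Units.smul_mk0, B₀.sum_repr]

end Frame

section Construction

variable {k : Type*} [Field k] {r : ℕ}

theorem exists_linearEquiv_rncVec (B : Module.Basis (Fin (r + 1)) k (Fin (r + 1) → k))
    {t : Fin (r + 1) → k} (ht : Function.Injective t) :
    ∃ g : (Fin (r + 1) → k) ≃ₗ[k] (Fin (r + 1) → k),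
      (∀ i, g (rncVec r 1 (t i)) = (nodal (univ.erase i) t).eval (t i) • B i) ∧
      g (rncVec r 0 1) = ∑ i, B i ∧
      g (rncVec r 1 0) = ∑ i, (nodal (univ.erase i) t).eval 0 • B i := by
  classical
  let M : Matrix (Fin (r + 1)) (Fin (r + 1)) k := .of fun i j => (nodal (univ.erase i) t).coeff j
  let F := B.equivFun.symm.toLinearMap ∘ₗ M.mulVecLin
  have hF : ∀ v, F v = ∑ i, M.mulVec v i • B i := fun v => by
    simp [F, Module.Basis.equivFun_symm_apply]
  have hdeg : ∀ i, (nodal (univ.erase i) t).natDegree = r := by simp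
  have hM : ∀ i s, M.mulVec (rncVec r 1 s) i = (nodal (univ.erase i) t).eval s := fun i s => by
    rw [eval_eq_sum_range' (n := r + 1) (by rw [hdeg]; omega), ← Fin.sum_univ_eq_sum_range,
      rncVec_one_left]
    rfl
  have hnode : ∀ i, F (rncVec r 1 (t i)) = (nodal (univ.erase i) t).eval (t i) • B i := by
    intro i
    rw [hF, Finset.sum_eq_single i (fun l _ hl => ?_) (by simp), hM]
    rw [hM, eval_nodal_at_node (by simpa using hl.symm), zero_smul]
  have hnode_ne : ∀ i, (nodal (univ.erase i) t).eval (t i) ≠ 0 := fun i =>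
    eval_nodal_not_at_node fun l hl => ht.ne (ne_of_mem_erase hl).symm
  have hsurj : Function.Surjective F := by
    rw [← LinearMap.range_eq_top, eq_top_iff, ← B.span_eq, Submodule.span_le]
    rintro _ ⟨i, rfl⟩
    refine ⟨((nodal (univ.erase i) t).eval (t i))⁻¹ • rncVec r 1 (t i), ?_⟩
    rw [map_smul, hnode, smul_smul, inv_mul_cancel₀ (hnode_ne i), one_smul]
  refine ⟨.ofBijective F ⟨LinearMap.injective_iff_surjective.mpr hsurj, hsurj⟩, hnode, ?_, ?_⟩
  · change F _ = _
    rw [hF, rncVec_zero_one]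
    refine Finset.sum_congr rfl fun i _ => ?_
    rw [Matrix.mulVec_single_one]
    have hlead : (nodal (univ.erase i) t).coeff r = 1 := by
      simpa [hdeg i] using (nodal_monic (s := univ.erase i) (v := t)).coeff_natDegree
    simp [M, hlead]
  · change F _ = _
    rw [hF, rncVec_one_zero]
    refine Finset.sum_congr rfl fun i _ => ?_
    rw [Matrix.mulVec_single_one]
    simp [M, coeff_zero_eq_eval_zero]

theorem mk_mem_map_stdRNC {g : (Fin (r + 1) → k) ≃ₗ[k] (Fin (r + 1) → k)} {a b c : k}
    {w : Fin (r + 1) → k} (hw : w ≠ 0) (hc : c ≠ 0) (h : g (rncVec r a b) = c • w) :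
    Projectivization.mk k w hw ∈
      Projectivization.map (g : (Fin (r + 1) → k) →ₗ[k] (Fin (r + 1) → k)) g.injective ''
        stdRNC k r := by
  have hv : rncVec r a b ≠ 0 := fun h0 => smul_ne_zero hc hw (by rw [← h, h0, map_zero])
  refine ⟨Projectivization.mk k _ hv, ⟨a, b, hv, rfl⟩, ?_⟩
  rw [Projectivization.map_mk, Projectivization.mk_eq_mk_iff']
  exact ⟨c, h.symm⟩

variable {B : Module.Basis (Fin (r + 1)) k (Fin (r + 1) → k)}
  {p : Fin (r + 1) → ℙ k (Fin (r + 1) → k)} {u x : ℙ k (Fin (r + 1) → k)}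

theorem exists_linearEquiv_frame_subset_map_stdRNC
    (hB : ∀ i, Projectivization.mk k (B i) (B.ne_zero i) = p i) (hBu : ∑ i, B i = u.rep)
    {t : Fin (r + 1) → k} (ht : Function.Injective t) :
    ∃ g : (Fin (r + 1) → k) ≃ₗ[k] (Fin (r + 1) → k),
      insert u (Set.range p) ⊆
        Projectivization.map (g : (Fin (r + 1) → k) →ₗ[k] (Fin (r + 1) → k)) g.injective ''
          stdRNC k r ∧
      g (rncVec r 1 0) = ∑ i, (nodal (univ.erase i) t).eval 0 • B i := by
  obtain ⟨g, hnode, hinf, hzero⟩ := exists_linearEquiv_rncVec B ht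
  refine ⟨g, Set.insert_subset_iff.mpr ⟨?_, ?_⟩, hzero⟩
  · rw [← u.mk_rep]
    exact mk_mem_map_stdRNC _ one_ne_zero (by rw [hinf, hBu, one_smul])
  · rintro _ ⟨i, rfl⟩
    rw [← hB i]
    exact mk_mem_map_stdRNC _ (eval_nodal_not_at_node fun l hl => ht.ne (ne_of_mem_erase hl).symm)
      (hnode i)

theorem exists_isRNC_of_inLinGenPos_insert
    (hB : ∀ i, Projectivization.mk k (B i) (B.ne_zero i) = p i) (hBu : ∑ i, B i = u.rep)
    (hS : InLinGenPos k r (insert x (insert u (Set.range p))))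
    (hx : x ∉ insert u (Set.range p)) :
    ∃ D, IsRNC k r D ∧ insert u (Set.range p) ⊆ D ∧ x ∈ D := by
  classical
  set q := B.repr x.rep
  have hq : ∀ i, q i ≠ 0 := repr_rep_ne_zero hB
    (hS.mono (Set.insert_subset_insert (Set.subset_insert _ _))) (fun h => hx (Or.inr h))
  have ht : Function.Injective fun i => -(q i)⁻¹ :=
    neg_injective.comp (inv_injective.comp (repr_rep_injective hB hBu hS hx))
  obtain ⟨g, hsub, hg⟩ := exists_linearEquiv_frame_subset_map_stdRNC hB hBu ht
  refine ⟨_, ⟨g, rfl⟩, hsub, ?_⟩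
  set κ := ∏ l, (q l)⁻¹
  have hweight : ∀ i, (nodal (univ.erase i) fun l => -(q l)⁻¹).eval 0 = κ * q i := fun i => by
    have hκ : (∏ l ∈ univ.erase i, (q l)⁻¹) * (q i)⁻¹ = κ :=
      prod_erase_mul _ _ (mem_univ i)
    simp only [eval_nodal, zero_sub, neg_neg]
    rw [← hκ, mul_assoc, inv_mul_cancel₀ (hq i), mul_one]
  rw [← x.mk_rep]
  refine mk_mem_map_stdRNC (a := 1) (b := 0) (c := κ) _
    (prod_ne_zero_iff.mpr fun l _ => inv_ne_zero (hq l)) ?_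
  rw [hg]
  simp_rw [hweight, mul_smul, ← smul_sum]
  rw [B.sum_repr]

end Construction

theorem statement_17_general (k : Type*) [Field k] [CharZero k]
    (r : ℕ) (hr : 3 ≤ r)
    (S : Finset (Projectivization k (Fin (r + 1) → k))) (hcard : S.card = r + 2)
    (hS : InLinGenPos k r ↑S) :
    (∀ Q : Projectivization k (Fin (r + 1) → k), Q ∉ (S : Set _) →
      ((∃ D : Set (Projectivization k (Fin (r + 1) → k)),
          IsRNC k r D ∧ ↑S ⊆ D ∧ Q ∈ D) ↔ InLinGenPos k r (insert Q ↑S))) ∧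
    ⋃₀ {D : Set (Projectivization k (Fin (r + 1) → k)) | IsRNC k r D ∧ ↑S ⊆ D} =
      ↑S ∪ {Q : Projectivization k (Fin (r + 1) → k) | InLinGenPos k r (insert Q ↑S)} := by
  obtain ⟨u, p, hp, hu, hSup⟩ := S.exists_eq_insert_range_of_card_eq_succ hcard
  rw [hSup] at hS ⊢
  obtain ⟨B, hB, hBu⟩ := exists_basis_frame hS hp hu
  have hiff : ∀ Q, Q ∉ insert u (Set.range p) →
      ((∃ D, IsRNC k r D ∧ insert u (Set.range p) ⊆ D ∧ Q ∈ D) ↔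
        InLinGenPos k r (insert Q (insert u (Set.range p)))) := fun Q hQ =>
    ⟨fun ⟨D, hD, hSD, hQD⟩ => (hD.inLinGenPos (by omega)).mono (Set.insert_subset hQD hSD),
      fun hSQ => exists_isRNC_of_inLinGenPos_insert hB hBu hSQ hQ⟩
  obtain ⟨g, hg, -⟩ := exists_linearEquiv_frame_subset_map_stdRNC hB hBu
    (t := fun i : Fin (r + 1) => (i : k)) (Nat.cast_injective.comp Fin.val_injective)
  refine ⟨hiff, Set.Subset.antisymm ?_ ?_⟩
  · rintro Q ⟨D, ⟨hD, hSD⟩, hQD⟩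
    by_cases hQ : Q ∈ insert u (Set.range p)
    · exact Or.inl hQ
    · exact Or.inr ((hiff Q hQ).mp ⟨D, hD, hSD, hQD⟩)
  · intro Q hQ
    by_cases hQS : Q ∈ insert u (Set.range p)
    · exact ⟨_, ⟨⟨g, rfl⟩, hg⟩, hg hQS⟩
    · obtain ⟨D, hD, hSD, hQD⟩ := (hiff Q hQS).mpr (hQ.resolve_left hQS)
      exact ⟨D, ⟨hD, hSD⟩, hQD⟩

/-- For a set `S` of `r+2` points of `ℙ^r(k)` in linearly general position, a point
`Q ∉ S` lies on some rational normal curve containing `S` iff `S ∪ {Q}` is in linearly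
general position; i.e., the union of all rational normal curves containing `S` equals
`S ∪ {Q | S ∪ {Q} in linearly general position}`. -/
theorem statement_17 (k : Type*) [Field k] [IsAlgClosed k] [CharZero k]
    (r : ℕ) (hr : 3 ≤ r)
    (S : Finset (Projectivization k (Fin (r + 1) → k))) (hcard : S.card = r + 2)
    (hS : InLinGenPos k r ↑S) :
    (∀ Q : Projectivization k (Fin (r + 1) → k), Q ∉ (S : Set _) →
      ((∃ D : Set (Projectivization k (Fin (r + 1) → k)),
          IsRNC k r D ∧ ↑S ⊆ D ∧ Q ∈ D) ↔ InLinGenPos k r (insert Q ↑S))) ∧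
    ⋃₀ {D : Set (Projectivization k (Fin (r + 1) → k)) | IsRNC k r D ∧ ↑S ⊆ D} =
      ↑S ∪ {Q : Projectivization k (Fin (r + 1) → k) | InLinGenPos k r (insert Q ↑S)} :=
  statement_17_general k r hr S hcard hS
end
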